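/- arXiv:2401.01565 — 4 statements merged into one kernel-verified Lean document; each statement's English description precedes it below -/
import Mathlib

section
/- (Global equivalence of HSCOP and its MIP, forward direction) Suppose all ψ_{ij} ≥ 0 and φ_{ij}(x) ≥ B for all x ∈ P, with B < 0. If x̄ is a global maximizer of: maximize θ(x) + ∑_j ψ_{0j} 1_{[0,∞)}(φ_{0j}(x)) over x ∈ P subject to ∑_j ψ_{ij} 1_{[0,∞)}(φ_{ij}(x)) ≥ b_i for i = 1,…,m, then setting z̄_{ij} = 1_{[0,∞)}(φ_{ij}(x̄)), the pair (x̄, z̄) is a global maximizer of: maximize θ(x) + ∑_j ψ_{0j} z_{0j} over x ∈ P, z_{ij} ∈ {0,1}, subject to ∑_j ψ_{ij} z_{ij} ≥ b_i for i = 1,…,m and φ_{ij}(x) ≥ B(1 − z_{ij}) for all (i,j). -/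
/-- Closed Heaviside indicator of `[0, ∞)`. -/
noncomputable def Hs (t : ℝ) : ℝ := if 0 ≤ t then 1 else 0

lemma Hs_bigM {B t : ℝ} (h : B ≤ t) : B * (1 - Hs t) ≤ t := by
  unfold Hs; split
  · simpa using ‹0 ≤ t›
  · simpa using h

lemma z_le_Hs {B t z : ℝ} (hB : B < 0) (hz : z = 0 ∨ z = 1)
    (h : B * (1 - z) ≤ t) : z ≤ Hs t := by
  unfold Hs
  rcases hz with hz | hz <;> subst hz <;> split <;> simp_all <;> linarith

/-- Forward direction of the global equivalence between the HSCOP and its MIP. -/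
theorem hscop_global_implies_mip_global {n m J0 : ℕ} (J : Fin m → ℕ)
    (P : Set (Fin n → ℝ)) (θ : (Fin n → ℝ) → ℝ)
    (ψ0 : Fin J0 → ℝ) (φ0 : Fin J0 → (Fin n → ℝ) → ℝ)
    (ψ : (i : Fin m) → Fin (J i) → ℝ) (φ : (i : Fin m) → Fin (J i) → (Fin n → ℝ) → ℝ)
    (b : Fin m → ℝ) (B : ℝ) (hB : B < 0)
    (hψ0 : ∀ j, 0 ≤ ψ0 j) (hψ : ∀ i j, 0 ≤ ψ i j)
    (hlow0 : ∀ x ∈ P, ∀ j, B ≤ φ0 j x)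
    (hlow : ∀ x ∈ P, ∀ i j, B ≤ φ i j x)
    (xbar : Fin n → ℝ) (hxbar : xbar ∈ P)
    (hfeas : ∀ i, b i ≤ ∑ j, ψ i j * Hs (φ i j xbar))
    (hopt : ∀ x ∈ P, (∀ i, b i ≤ ∑ j, ψ i j * Hs (φ i j x)) →
      θ x + ∑ j, ψ0 j * Hs (φ0 j x) ≤ θ xbar + ∑ j, ψ0 j * Hs (φ0 j xbar)) :
    -- (xbar, zbar) with zbar = Hs ∘ φ(xbar) is feasible for the MIP ...
    ((∀ i, b i ≤ ∑ j, ψ i j * Hs (φ i j xbar)) ∧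
     (∀ j, B * (1 - Hs (φ0 j xbar)) ≤ φ0 j xbar) ∧
     (∀ i j, B * (1 - Hs (φ i j xbar)) ≤ φ i j xbar)) ∧
    -- ... and dominates every MIP-feasible pair (x, z)
    (∀ x ∈ P, ∀ (z0 : Fin J0 → ℝ) (z : (i : Fin m) → Fin (J i) → ℝ),
      (∀ j, z0 j = 0 ∨ z0 j = 1) → (∀ i j, z i j = 0 ∨ z i j = 1) →
      (∀ i, b i ≤ ∑ j, ψ i j * z i j) →
      (∀ j, B * (1 - z0 j) ≤ φ0 j x) →
      (∀ i j, B * (1 - z i j) ≤ φ i j x) →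
      θ x + ∑ j, ψ0 j * z0 j ≤ θ xbar + ∑ j, ψ0 j * Hs (φ0 j xbar)) := by
  refine ⟨⟨hfeas, fun j => Hs_bigM (hlow0 xbar hxbar j),
    fun i j => Hs_bigM (hlow xbar hxbar i j)⟩, ?_⟩
  intro x hx z0 z hz0 hz hbz hM0 hM
  have hz0le : ∀ j, z0 j ≤ Hs (φ0 j x) := fun j => z_le_Hs hB (hz0 j) (hM0 j)
  have hzle : ∀ i j, z i j ≤ Hs (φ i j x) := fun i j => z_le_Hs hB (hz i j) (hM i j)
  have hfx : ∀ i, b i ≤ ∑ j, ψ i j * Hs (φ i j x) := fun i =>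
    le_trans (hbz i) (Finset.sum_le_sum fun j _ =>
      mul_le_mul_of_nonneg_left (hzle i j) (hψ i j))
  calc θ x + ∑ j, ψ0 j * z0 j
      ≤ θ x + ∑ j, ψ0 j * Hs (φ0 j x) := by
        gcongr with j
        exacts [hψ0 j, hz0le j]
    _ ≤ _ := hopt x hx hfx
end

section
/- (Global equivalence of HSCOP and its MIP, converse direction) Suppose all ψ_{ij} ≥ 0 and φ_{ij}(x) ≥ B for all x ∈ P, with B < 0. If (x̄, z̄) is a global maximizer of: maximize θ(x) + ∑_j ψ_{0j} z_{0j} over x ∈ P, z_{ij} ∈ {0,1}, subject to ∑_j ψ_{ij} z_{ij} ≥ b_i for i = 1,…,m and φ_{ij}(x) ≥ B(1 − z_{ij}) for all (i,j), then x̄ is a global maximizer of: maximize θ(x) + ∑_j ψ_{0j} 1_{[0,∞)}(φ_{0j}(x)) over x ∈ P subject to ∑_j ψ_{ij} 1_{[0,∞)}(φ_{ij}(x)) ≥ b_i for i = 1,…,m. -/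
lemma Hs_eq_zero_or_eq_one (t : ℝ) : Hs t = 0 ∨ Hs t = 1 := by
  unfold Hs; split <;> simp

lemma le_Hs_of_mul_one_sub_le {z t B : ℝ} (hz : z = 0 ∨ z = 1) (h : B * (1 - z) ≤ t) :
    z ≤ Hs t := by
  rcases hz with rfl | rfl
  · unfold Hs; split <;> norm_num
  · simp only [sub_self, mul_zero] at h
    simp [Hs, h]

lemma mul_one_sub_Hs_le {t B : ℝ} (hBt : B ≤ t) : B * (1 - Hs t) ≤ t := by
  unfold Hs; split
  · simpa
  · simpa using hBt

lemma sum_mul_le_sum_mul_Hs {ι : Type*} [Fintype ι] {w z f : ι → ℝ} {B : ℝ}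
    (hw : ∀ j, 0 ≤ w j) (hz : ∀ j, z j = 0 ∨ z j = 1) (h : ∀ j, B * (1 - z j) ≤ f j) :
    ∑ j, w j * z j ≤ ∑ j, w j * Hs (f j) :=
  Finset.sum_le_sum fun j _ =>
    mul_le_mul_of_nonneg_left (le_Hs_of_mul_one_sub_le (hz j) (h j)) (hw j)

theorem mip_global_implies_hscop_global_general {n m J0 : ℕ} (J : Fin m → ℕ)
    (P : Set (Fin n → ℝ)) (θ : (Fin n → ℝ) → ℝ)
    (ψ0 : Fin J0 → ℝ) (φ0 : Fin J0 → (Fin n → ℝ) → ℝ)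
    (ψ : (i : Fin m) → Fin (J i) → ℝ) (φ : (i : Fin m) → Fin (J i) → (Fin n → ℝ) → ℝ)
    (b : Fin m → ℝ) (B : ℝ)
    (hψ0 : ∀ j, 0 ≤ ψ0 j) (hψ : ∀ i j, 0 ≤ ψ i j)
    (hlow0 : ∀ x ∈ P, ∀ j, B ≤ φ0 j x)
    (hlow : ∀ x ∈ P, ∀ i j, B ≤ φ i j x)
    (xbar : Fin n → ℝ)
    (zbar0 : Fin J0 → ℝ) (zbar : (i : Fin m) → Fin (J i) → ℝ)
    (hzbar0 : ∀ j, zbar0 j = 0 ∨ zbar0 j = 1) (hzbar : ∀ i j, zbar i j = 0 ∨ zbar i j = 1)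
    (hfeas1 : ∀ i, b i ≤ ∑ j, ψ i j * zbar i j)
    (hfeas2 : ∀ j, B * (1 - zbar0 j) ≤ φ0 j xbar)
    (hfeas3 : ∀ i j, B * (1 - zbar i j) ≤ φ i j xbar)
    (hopt : ∀ x ∈ P, ∀ (z0 : Fin J0 → ℝ) (z : (i : Fin m) → Fin (J i) → ℝ),
      (∀ j, z0 j = 0 ∨ z0 j = 1) → (∀ i j, z i j = 0 ∨ z i j = 1) →
      (∀ i, b i ≤ ∑ j, ψ i j * z i j) →
      (∀ j, B * (1 - z0 j) ≤ φ0 j x) →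
      (∀ i j, B * (1 - z i j) ≤ φ i j x) →
      θ x + ∑ j, ψ0 j * z0 j ≤ θ xbar + ∑ j, ψ0 j * zbar0 j) :
    (∀ i, b i ≤ ∑ j, ψ i j * Hs (φ i j xbar)) ∧
    (∀ x ∈ P, (∀ i, b i ≤ ∑ j, ψ i j * Hs (φ i j x)) →
      θ x + ∑ j, ψ0 j * Hs (φ0 j x) ≤ θ xbar + ∑ j, ψ0 j * Hs (φ0 j xbar)) := by
  refine ⟨fun i => (hfeas1 i).trans (sum_mul_le_sum_mul_Hs (hψ i) (hzbar i) (hfeas3 i)), ?_⟩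
  intro x hx hfeas
  have hmip := hopt x hx (fun j => Hs (φ0 j x)) (fun i j => Hs (φ i j x))
    (fun j => Hs_eq_zero_or_eq_one _) (fun i j => Hs_eq_zero_or_eq_one _) hfeas
    (fun j => mul_one_sub_Hs_le (hlow0 x hx j)) (fun i j => mul_one_sub_Hs_le (hlow x hx i j))
  exact hmip.trans (add_le_add_right (sum_mul_le_sum_mul_Hs hψ0 hzbar0 hfeas2) _)

/-- Converse direction of the global equivalence between the HSCOP and its MIP. -/
theorem mip_global_implies_hscop_global {n m J0 : ℕ} (J : Fin m → ℕ)
    (P : Set (Fin n → ℝ)) (θ : (Fin n → ℝ) → ℝ)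
    (ψ0 : Fin J0 → ℝ) (φ0 : Fin J0 → (Fin n → ℝ) → ℝ)
    (ψ : (i : Fin m) → Fin (J i) → ℝ) (φ : (i : Fin m) → Fin (J i) → (Fin n → ℝ) → ℝ)
    (b : Fin m → ℝ) (B : ℝ) (hB : B < 0)
    (hψ0 : ∀ j, 0 ≤ ψ0 j) (hψ : ∀ i j, 0 ≤ ψ i j)
    (hlow0 : ∀ x ∈ P, ∀ j, B ≤ φ0 j x)
    (hlow : ∀ x ∈ P, ∀ i j, B ≤ φ i j x)
    (xbar : Fin n → ℝ) (hxbar : xbar ∈ P)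
    (zbar0 : Fin J0 → ℝ) (zbar : (i : Fin m) → Fin (J i) → ℝ)
    (hzbar0 : ∀ j, zbar0 j = 0 ∨ zbar0 j = 1) (hzbar : ∀ i j, zbar i j = 0 ∨ zbar i j = 1)
    (hfeas1 : ∀ i, b i ≤ ∑ j, ψ i j * zbar i j)
    (hfeas2 : ∀ j, B * (1 - zbar0 j) ≤ φ0 j xbar)
    (hfeas3 : ∀ i j, B * (1 - zbar i j) ≤ φ i j xbar)
    (hopt : ∀ x ∈ P, ∀ (z0 : Fin J0 → ℝ) (z : (i : Fin m) → Fin (J i) → ℝ),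
      (∀ j, z0 j = 0 ∨ z0 j = 1) → (∀ i j, z i j = 0 ∨ z i j = 1) →
      (∀ i, b i ≤ ∑ j, ψ i j * z i j) →
      (∀ j, B * (1 - z0 j) ≤ φ0 j x) →
      (∀ i j, B * (1 - z i j) ≤ φ i j x) →
      θ x + ∑ j, ψ0 j * z0 j ≤ θ xbar + ∑ j, ψ0 j * zbar0 j) :
    (∀ i, b i ≤ ∑ j, ψ i j * Hs (φ i j xbar)) ∧
    (∀ x ∈ P, (∀ i, b i ≤ ∑ j, ψ i j * Hs (φ i j x)) →
      θ x + ∑ j, ψ0 j * Hs (φ0 j x) ≤ θ xbar + ∑ j, ψ0 j * Hs (φ0 j xbar)) :=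
  mip_global_implies_hscop_global_general J P θ ψ0 φ0 ψ φ b B hψ0 hψ hlow0 hlow xbar zbar0 zbar
    hzbar0 hzbar hfeas1 hfeas2 hfeas3 hopt
end

section
/- (Local optimality from restricted global optimality) Suppose each φ_{ij} : ℝ^n → ℝ is continuous, all ψ_{ij} ≥ 0, and x̄ is feasible to the HSCOP. Fix ε₁, ε₂ > 0 such that no φ_{ij}(x̄) lies in [−ε₂, 0) ∪ (0, ε₁] — i.e., for every (i,j), either φ_{ij}(x̄) > ε₁, φ_{ij}(x̄) = 0, or φ_{ij}(x̄) < −ε₂. If x̄ is a global maximizer of θ(x) + ∑_{j : φ_{0j}(x̄) ≥ −ε₂} ψ_{0j} 1_{[0,∞)}(φ_{0j}(x)) over the restricted set X_{ε₁,ε₂}(x̄) = {x ∈ P : ∑_{j : φ_{ij}(x̄) ≥ −ε₂} ψ_{ij} 1_{[0,∞)}(φ_{ij}(x)) ≥ b_i ∀i, φ_{ij}(x) ≥ 0 whenever φ_{ij}(x̄) > ε₁}, then x̄ is a local maximizer of the HSCOP: maximize θ(x) + ∑_{j=1}^{J_0} ψ_{0j} 1_{[0,∞)}(φ_{0j}(x))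 over x ∈ P subject to ∑_{j=1}^{J_i} ψ_{ij} 1_{[0,∞)}(φ_{ij}(x)) ≥ b_i, i = 1,…,m. -/
/-- The restricted feasible set `X_{ε₁,ε₂}(xbar)` of the reduced HSCOP. -/
noncomputable def restrictedSet {n m : ℕ} (J : Fin m → ℕ) (P : Set (Fin n → ℝ))
    (ψ : (i : Fin m) → Fin (J i) → ℝ) (φ : (i : Fin m) → Fin (J i) → (Fin n → ℝ) → ℝ)
    (b : Fin m → ℝ) (xbar : Fin n → ℝ) (ε1 ε2 : ℝ) : Set (Fin n → ℝ) :=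
  {x | x ∈ P ∧
    (∀ i, b i ≤ ∑ j, if -ε2 ≤ φ i j xbar then ψ i j * Hs (φ i j x) else 0) ∧
    (∀ i j, ε1 < φ i j xbar → 0 ≤ φ i j x)}

/-- Global optimality for the restricted problem implies local optimality for the HSCOP. -/
theorem restricted_global_implies_local {n m J0 : ℕ} (J : Fin m → ℕ)
    (P : Set (Fin n → ℝ)) (θ : (Fin n → ℝ) → ℝ) (hθ : Continuous θ)
    (ψ0 : Fin J0 → ℝ) (φ0 : Fin J0 → (Fin n → ℝ) → ℝ)
    (ψ : (i : Fin m) → Fin (J i) → ℝ) (φ : (i : Fin m) → Fin (J i) → (Fin n → ℝ) → ℝ)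
    (b : Fin m → ℝ)
    (hφ0 : ∀ j, Continuous (φ0 j)) (hφ : ∀ i j, Continuous (φ i j))
    (hψ0 : ∀ j, 0 ≤ ψ0 j) (hψ : ∀ i j, 0 ≤ ψ i j)
    (xbar : Fin n → ℝ) (hxbar : xbar ∈ P)
    (hfeas : ∀ i, b i ≤ ∑ j, ψ i j * Hs (φ i j xbar))
    (ε1 ε2 : ℝ) (h1 : 0 < ε1) (h2 : 0 < ε2)
    -- no score value at `xbar` lies in `[-ε₂, 0) ∪ (0, ε₁]`
    (hgap0 : ∀ j, ε1 < φ0 j xbar ∨ φ0 j xbar = 0 ∨ φ0 j xbar < -ε2)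
    (hgap : ∀ i j, ε1 < φ i j xbar ∨ φ i j xbar = 0 ∨ φ i j xbar < -ε2)
    -- xbar globally maximizes the restricted problem over `X_{ε₁,ε₂}(xbar)`
    (hopt : ∀ x ∈ restrictedSet J P ψ φ b xbar ε1 ε2,
      θ x + ∑ j, (if -ε2 ≤ φ0 j xbar then ψ0 j * Hs (φ0 j x) else 0) ≤
        θ xbar + ∑ j, (if -ε2 ≤ φ0 j xbar then ψ0 j * Hs (φ0 j xbar) else 0)) :
    -- then xbar is a local maximizer of the HSCOP
    ∃ δ > 0, ∀ x ∈ P, (∀ i, b i ≤ ∑ j, ψ i j * Hs (φ i j x)) →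
      dist x xbar < δ →
      θ x + ∑ j, ψ0 j * Hs (φ0 j x) ≤ θ xbar + ∑ j, ψ0 j * Hs (φ0 j xbar) := by
  have key : ∀ᶠ x in nhds xbar,
      (∀ i, ∀ j, (ε1 < φ i j xbar → 0 < φ i j x) ∧ (φ i j xbar < -ε2 → φ i j x < 0)) ∧
      (∀ j, (ε1 < φ0 j xbar → 0 < φ0 j x) ∧ (φ0 j xbar < -ε2 → φ0 j x < 0)) := by
    refine Filter.Eventually.and ?_ ?_
    · rw [Filter.eventually_all]; intro i
      rw [Filter.eventually_all]; intro j
      refine Filter.Eventually.and ?_ ?_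
      · by_cases h : ε1 < φ i j xbar
        · filter_upwards [((hφ i j).tendsto xbar).eventually
            (eventually_gt_nhds (h1.trans h))] with x hx
          exact fun _ => hx
        · exact Filter.Eventually.of_forall fun x hx => absurd hx h
      · by_cases h : φ i j xbar < -ε2
        · filter_upwards [((hφ i j).tendsto xbar).eventually
            (eventually_lt_nhds (show _ < (0:ℝ) by linarith))] with x hx
          exact fun _ => hx
        · exact Filter.Eventually.of_forall fun x hx => absurd hx h
    · rw [Filter.eventually_all]; intro j
      refine Filter.Eventually.and ?_ ?_
      · by_cases h : ε1 < φ0 j xbar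
        · filter_upwards [((hφ0 j).tendsto xbar).eventually
            (eventually_gt_nhds (h1.trans h))] with x hx
          exact fun _ => hx
        · exact Filter.Eventually.of_forall fun x hx => absurd hx h
      · by_cases h : φ0 j xbar < -ε2
        · filter_upwards [((hφ0 j).tendsto xbar).eventually
            (eventually_lt_nhds (show _ < (0:ℝ) by linarith))] with x hx
          exact fun _ => hx
        · exact Filter.Eventually.of_forall fun x hx => absurd hx h
  rw [Metric.eventually_nhds_iff] at key
  obtain ⟨δ, hδ, hkey⟩ := key
  refine ⟨δ, hδ, fun x hxP hxfeas hxd => ?_⟩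
  obtain ⟨hk1, hk0⟩ := hkey hxd
  have hxR : x ∈ restrictedSet J P ψ φ b xbar ε1 ε2 := by
    refine ⟨hxP, fun i => ?_, fun i j h => le_of_lt ((hk1 i j).1 h)⟩
    calc b i ≤ ∑ j, ψ i j * Hs (φ i j x) := hxfeas i
      _ = ∑ j, if -ε2 ≤ φ i j xbar then ψ i j * Hs (φ i j x) else 0 := by
        apply Finset.sum_congr rfl
        intro j _
        split_ifs with h
        · rfl
        · push_neg at h
          have hneg := (hk1 i j).2 h
          simp [Hs, not_le.mpr hneg]
  have hmain := hopt x hxR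
  have e1 : ∑ j, ψ0 j * Hs (φ0 j x) =
      ∑ j, if -ε2 ≤ φ0 j xbar then ψ0 j * Hs (φ0 j x) else 0 := by
    apply Finset.sum_congr rfl
    intro j _
    split_ifs with h
    · rfl
    · push_neg at h
      have hneg := (hk0 j).2 h
      simp [Hs, not_le.mpr hneg]
  have e2 : ∑ j, (if -ε2 ≤ φ0 j xbar then ψ0 j * Hs (φ0 j xbar) else 0) ≤
      ∑ j, ψ0 j * Hs (φ0 j xbar) := by
    apply Finset.sum_le_sum
    intro j _
    have hH : (0:ℝ) ≤ Hs (φ0 j xbar) := by unfold Hs; split_ifs <;> norm_num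
    split_ifs with h
    · exact le_rfl
    · exact mul_nonneg (hψ0 j) hH
  linarith
end

section
/- (Decomposition of piecewise affine functions enables big-C reformulation) Let φ(x) = max_{1≤i≤I} (aᵢᵀx + αᵢ) − max_{1≤j≤J} (bⱼᵀx + βⱼ), and suppose x ranges over a set on which t − (aᵢᵀx + αᵢ) ≤ C for all i, where t = max_i (aᵢᵀx + αᵢ) and C > 0. Then φ(x) ≥ 0 holds if and only if there exist t ∈ ℝ and v ∈ {0,1}^I such that t ≥ max{max_i (aᵢᵀx + αᵢ), max_j (bⱼᵀx + βⱼ)}, t − (aᵢᵀx + αᵢ) ≤ C vᵢ for all i, and ∑_i vᵢ ≤ I − 1. -/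
/-!
If `φ(x) ≥ 0`, take `t` to be the first maximum and switch off (`vᵢ = 0`) one index attaining
it; the big-`C` bound is exactly what makes `vᵢ = 1` admissible for all other indices.
Conversely, `∑ vᵢ ≤ I - 1` forces some `vᵢ = 0`, and then `t ≤ aᵢᵀx + αᵢ` pins `t` below the first
maximum, while `t` dominates the second one.
-/

def dotp {n : ℕ} (u v : Fin n → ℝ) : ℝ := ∑ i, u i * v i

namespace BigC

open Finset

variable {ι : Type*} [Fintype ι] [Nonempty ι]

/-- `(t, v)` is a feasible point of the big-`C` reformulation of `max f - B ≥ 0`. -/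
def Feasible (f : ι → ℝ) (B C t : ℝ) (v : ι → ℝ) : Prop :=
  (∀ i, v i = 0 ∨ v i = 1) ∧ max (univ.sup' univ_nonempty f) B ≤ t ∧
    (∀ i, t - f i ≤ C * v i) ∧ ∑ i, v i ≤ (Fintype.card ι : ℝ) - 1

omit [Nonempty ι] in
lemma exists_eq_zero_of_sum_le_card_sub_one {v : ι → ℝ} (hv : ∀ i, v i = 0 ∨ v i = 1)
    (hsum : ∑ i, v i ≤ (Fintype.card ι : ℝ) - 1) : ∃ i, v i = 0 := by
  have hlt : ∑ i, v i < ∑ _i : ι, (1 : ℝ) := by simp only [sum_const, card_univ, nsmul_one]; linarith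
  obtain ⟨i, -, hi⟩ := exists_lt_of_sum_lt hlt
  exact ⟨i, (hv i).resolve_right hi.ne⟩

lemma sum_update_one_zero [DecidableEq ι] (i₀ : ι) :
    ∑ i, Function.update (1 : ι → ℝ) i₀ 0 i = (Fintype.card ι : ℝ) - 1 := by
  rw [sum_update_of_mem (mem_univ _)]
  simp [← compl_eq_univ_sdiff, card_compl, Nat.cast_pred Fintype.card_pos]

lemma exists_feasible_of_le_sup' {f : ι → ℝ} {B C : ℝ}
    (hC : ∀ k, univ.sup' univ_nonempty f - f k ≤ C) (hB : B ≤ univ.sup' univ_nonempty f) :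
    ∃ t v, Feasible f B C t v := by
  classical
  obtain ⟨i₀, -, hi₀⟩ := exists_mem_eq_sup' univ_nonempty f
  refine ⟨_, Function.update 1 i₀ 0, fun i => ?_, max_le le_rfl hB, fun i => ?_,
    (sum_update_one_zero i₀).le⟩
  · rcases eq_or_ne i i₀ with rfl | hi <;> simp [*]
  · rcases eq_or_ne i i₀ with rfl | hi
    · simp [hi₀]
    · simpa [hi] using hC i

lemma le_sup'_of_feasible {f : ι → ℝ} {B C t : ℝ} {v : ι → ℝ} (h : Feasible f B C t v) :
    B ≤ univ.sup' univ_nonempty f := by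
  obtain ⟨hv, hmax, hCv, hsum⟩ := h
  obtain ⟨i, hi⟩ := exists_eq_zero_of_sum_le_card_sub_one hv hsum
  have ht : t ≤ f i := by simpa [hi] using hCv i
  calc B ≤ t := (le_max_right _ _).trans hmax
    _ ≤ f i := ht
    _ ≤ univ.sup' univ_nonempty f := le_sup' f (mem_univ i)

lemma le_sup'_iff_exists_feasible {f : ι → ℝ} {B C : ℝ}
    (hC : ∀ k, univ.sup' univ_nonempty f - f k ≤ C) :
    B ≤ univ.sup' univ_nonempty f ↔ ∃ t v, Feasible f B C t v :=
  ⟨exists_feasible_of_le_sup' hC, fun ⟨_, _, h⟩ => le_sup'_of_feasible h⟩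

end BigC

theorem piecewise_affine_bigC_reformulation_general {n I J : ℕ}
    (a : Fin (I + 1) → Fin n → ℝ) (α : Fin (I + 1) → ℝ)
    (b : Fin (J + 1) → Fin n → ℝ) (β : Fin (J + 1) → ℝ)
    (C : ℝ) (x : Fin n → ℝ)
    (hCx : ∀ k, (Finset.univ.sup' Finset.univ_nonempty
        (fun i => dotp (a i) x + α i)) - (dotp (a k) x + α k) ≤ C) :
    (0 ≤ (Finset.univ.sup' Finset.univ_nonempty (fun i => dotp (a i) x + α i))
        - (Finset.univ.sup' Finset.univ_nonempty (fun j => dotp (b j) x + β j))) ↔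
    (∃ (t : ℝ) (v : Fin (I + 1) → ℝ),
      (∀ i, v i = 0 ∨ v i = 1) ∧
      max (Finset.univ.sup' Finset.univ_nonempty (fun i => dotp (a i) x + α i))
          (Finset.univ.sup' Finset.univ_nonempty (fun j => dotp (b j) x + β j)) ≤ t ∧
      (∀ i, t - (dotp (a i) x + α i) ≤ C * v i) ∧
      (∑ i, v i) ≤ (I + 1 : ℝ) - 1) := by
  rw [sub_nonneg, BigC.le_sup'_iff_exists_feasible hCx]
  simp only [BigC.Feasible, Fintype.card_fin, Nat.cast_add, Nat.cast_one]

/-- Big-C mixed-integer reformulation of the piecewise-affine constraint `φ(x) ≥ 0`,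
where `φ(x) = max_i (aᵢᵀx + αᵢ) - max_j (bⱼᵀx + βⱼ)` (indices `i ∈ Fin (I+1)`,
`j ∈ Fin (J+1)`, so there are `I+1` affine pieces in the first max). -/
theorem piecewise_affine_bigC_reformulation {n I J : ℕ}
    (a : Fin (I + 1) → Fin n → ℝ) (α : Fin (I + 1) → ℝ)
    (b : Fin (J + 1) → Fin n → ℝ) (β : Fin (J + 1) → ℝ)
    (C : ℝ) (hC : 0 < C) (x : Fin n → ℝ)
    (hCx : ∀ k, (Finset.univ.sup' Finset.univ_nonempty
        (fun i => dotp (a i) x + α i)) - (dotp (a k) x + α k) ≤ C) :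
    (0 ≤ (Finset.univ.sup' Finset.univ_nonempty (fun i => dotp (a i) x + α i))
        - (Finset.univ.sup' Finset.univ_nonempty (fun j => dotp (b j) x + β j))) ↔
    (∃ (t : ℝ) (v : Fin (I + 1) → ℝ),
      (∀ i, v i = 0 ∨ v i = 1) ∧
      max (Finset.univ.sup' Finset.univ_nonempty (fun i => dotp (a i) x + α i))
          (Finset.univ.sup' Finset.univ_nonempty (fun j => dotp (b j) x + β j)) ≤ t ∧
      (∀ i, t - (dotp (a i) x + α i) ≤ C * v i) ∧
      (∑ i, v i) ≤ (I + 1 : ℝ) - 1) :=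
  piecewise_affine_bigC_reformulation_general a α b β C x hCx
end
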